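/- arXiv:1903.06113 — 2 statements merged into one kernel-verified Lean document; each statement's English description precedes it below -/
import Mathlib

section
/- Let G be a simple graph on a finite vertex set V with adjacency matrix A over ℝ, let α, c ∈ ℝ with 0 ≤ α ≤ 1 and 0 ≤ c ≤ 1, let x : V → ℝ satisfy 0 ≤ x(v) ≤ 1 for all v, and let C ⊆ V be a set of actively screened nodes. Define x'(v) = 0 for v ∈ C and x'(v) = (1 − x(v))·(1 − ∏_{u ∈ N(v)} (1 − α·x(u))) + (1 − c)·x(v) for v ∉ C. Let R be the diagonal 0/1 matrix with R(v,v) = 1 iff v ∈ C, and let M_a = (I − R)·(α·A + (1 − c)·I). Then x'(v) ≤ (M_a x)(v) for all v ∈ V. -/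
open Matrix

/-!
Screened rows of `M_a` vanish, matching `x' v = 0`. Off the screened set the `(1 - c) x(v)`
terms agree, and the infection term is at most `1 - ∏ (1 - α x(u)) ≤ ∑ α x(u)` by the
Weierstrass product inequality, which is the `α A` part of `M x`.
-/

theorem Finset.prod_one_sub_le_one {ι R : Type*} [CommRing R] [LinearOrder R]
    [IsStrictOrderedRing R] (s : Finset ι) (a : ι → R)
    (h0 : ∀ i ∈ s, 0 ≤ a i) (h1 : ∀ i ∈ s, a i ≤ 1) :
    ∏ i ∈ s, (1 - a i) ≤ 1 :=
  Finset.prod_le_one (fun i hi => sub_nonneg.2 (h1 i hi)) fun i hi => sub_le_self _ (h0 i hi)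

theorem Finset.one_sub_prod_one_sub_le_sum {ι R : Type*} [CommRing R] [LinearOrder R]
    [IsStrictOrderedRing R] (s : Finset ι) (a : ι → R)
    (h0 : ∀ i ∈ s, 0 ≤ a i) (h1 : ∀ i ∈ s, a i ≤ 1) :
    1 - ∏ i ∈ s, (1 - a i) ≤ ∑ i ∈ s, a i := by
  classical
  induction s using Finset.induction with
  | empty => simp
  | insert j s hj ih =>
    rw [Finset.forall_mem_insert] at h0 h1
    rw [Finset.prod_insert hj, Finset.sum_insert hj]
    have hP : ∏ i ∈ s, (1 - a i) ≤ 1 := s.prod_one_sub_le_one a h0.2 h1.2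
    nlinarith [ih h0.2 h1.2, mul_le_mul_of_nonneg_left hP h0.1]

theorem Matrix.one_sub_diagonal_indicator_mul_mulVec_apply {V R : Type*} [Fintype V]
    [DecidableEq V] [Ring R] (C : Finset V) (M : Matrix V V R) (x : V → R) (v : V) :
    (((1 - diagonal (fun w => if w ∈ C then 1 else 0)) * M) *ᵥ x) v =
      if v ∈ C then 0 else (M *ᵥ x) v := by
  rw [← mulVec_mulVec, sub_mulVec, one_mulVec, Pi.sub_apply, mulVec_diagonal]
  split_ifs <;> simp

theorem SimpleGraph.smul_adjMatrix_add_smul_one_mulVec_apply {V R : Type*} [Fintype V]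
    [DecidableEq V] [CommRing R] (G : SimpleGraph V) [DecidableRel G.Adj]
    (α β : R) (x : V → R) (v : V) :
    ((α • G.adjMatrix R + β • (1 : Matrix V V R)) *ᵥ x) v =
      α * ∑ u ∈ G.neighborFinset v, x u + β * x v := by
  simp [add_mulVec, smul_mulVec, adjMatrix_mulVec_apply]

theorem one_sub_mul_one_sub_prod_one_sub_le_sum {ι R : Type*} [CommRing R] [LinearOrder R]
    [IsStrictOrderedRing R] {p : R} (hp0 : 0 ≤ p) (s : Finset ι) (a : ι → R)
    (h0 : ∀ i ∈ s, 0 ≤ a i) (h1 : ∀ i ∈ s, a i ≤ 1) :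
    (1 - p) * (1 - ∏ i ∈ s, (1 - a i)) ≤ ∑ i ∈ s, a i :=
  calc (1 - p) * (1 - ∏ i ∈ s, (1 - a i)) ≤ 1 - ∏ i ∈ s, (1 - a i) :=
        mul_le_of_le_one_left (sub_nonneg.2 (s.prod_one_sub_le_one a h0 h1)) (sub_le_self _ hp0)
    _ ≤ ∑ i ∈ s, a i := s.one_sub_prod_one_sub_le_sum a h0 h1

theorem acts_one_step_screening_bound_general
    {V : Type*} [Fintype V] [DecidableEq V]
    (G : SimpleGraph V) [DecidableRel G.Adj]
    (α c : ℝ) (hα0 : 0 ≤ α) (hα1 : α ≤ 1)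
    (x : V → ℝ) (hx : ∀ v, 0 ≤ x v ∧ x v ≤ 1)
    (C : Finset V)
    (x' : V → ℝ)
    (hx'C : ∀ v ∈ C, x' v = 0)
    (hx'nC : ∀ v ∉ C, x' v =
      (1 - x v) * (1 - ∏ u ∈ G.neighborFinset v, (1 - α * x u)) + (1 - c) * x v) :
    let R : Matrix V V ℝ := Matrix.diagonal (fun v => if v ∈ C then 1 else 0)
    let Ma : Matrix V V ℝ := (1 - R) * (α • G.adjMatrix ℝ + (1 - c) • (1 : Matrix V V ℝ))
    ∀ v : V, x' v ≤ Ma.mulVec x v := by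
  intro R Ma v
  rw [one_sub_diagonal_indicator_mul_mulVec_apply]
  split_ifs with hv
  · exact (hx'C v hv).le
  rw [hx'nC v hv, G.smul_adjMatrix_add_smul_one_mulVec_apply, Finset.mul_sum]
  gcongr
  exact one_sub_mul_one_sub_prod_one_sub_le_sum (hx v).1 _ _
    (fun u _ => mul_nonneg hα0 (hx u).1) fun u _ => mul_le_one₀ hα1 (hx u).1 (hx u).2

/-- ACTS one-step bound with screening. With a simple graph `G` on a finite
vertex set with adjacency matrix `A`, `α, c ∈ [0,1]`, marginal beliefs `x v ∈ [0,1]`, and a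
screened set `C`, the update `x' v = 0` for `v ∈ C` and
`x' v = (1 - x v)(1 - ∏_{u∈N(v)}(1 - α x u)) + (1-c) x v` otherwise, satisfies
`x' v ≤ (M_a x)(v)` for all `v`, where `M_a = (I - R)(α A + (1-c) I)` and `R` is the
diagonal 0/1 indicator matrix of `C`. -/
theorem acts_one_step_screening_bound
    {V : Type*} [Fintype V] [DecidableEq V]
    (G : SimpleGraph V) [DecidableRel G.Adj]
    (α c : ℝ) (hα0 : 0 ≤ α) (hα1 : α ≤ 1) (hc0 : 0 ≤ c) (hc1 : c ≤ 1)
    (x : V → ℝ) (hx : ∀ v, 0 ≤ x v ∧ x v ≤ 1)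
    (C : Finset V)
    (x' : V → ℝ)
    (hx'C : ∀ v ∈ C, x' v = 0)
    (hx'nC : ∀ v ∉ C, x' v =
      (1 - x v) * (1 - ∏ u ∈ G.neighborFinset v, (1 - α * x u)) + (1 - c) * x v) :
    let R : Matrix V V ℝ := Matrix.diagonal (fun v => if v ∈ C then 1 else 0)
    let Ma : Matrix V V ℝ := (1 - R) * (α • G.adjMatrix ℝ + (1 - c) • (1 : Matrix V V ℝ))
    ∀ v : V, x' v ≤ Ma.mulVec x v :=
  acts_one_step_screening_bound_general G α c hα0 hα1 x hx C x' hx'C hx'nC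
end

section
/- Let G be a simple graph on a finite vertex set V, and let G* be the simple graph on V × {0,1,2} with adjacency: (u,i) adjacent to (v,j) iff either (u = v and {i,j} = {0,1}) or (G.Adj u v and {i,j} = {1,2}). For a set S of vertices of a simple graph H, define spread(H, S) = S ∪ { w : ∃ z ∈ S, H.Adj w z }. Then for every C ⊆ V: spread(G*, (V × {0}) ∪ ((V ∖ C) × {1})) ∩ (V × {2}) ⊆ C × {2} if and only if C is a vertex cover of G (i.e., every edge of G has at least one endpoint in C). -/
/-- The graph `G*` from the NP-hardness reduction: vertices are `V × {0,1,2}`;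
`(u,i)` is adjacent to `(v,j)` iff either `u = v` and `{i,j} = {0,1}`, or
`G.Adj u v` and `{i,j} = {1,2}`. -/
def Gstar {V : Type*} (G : SimpleGraph V) : SimpleGraph (V × Fin 3) where
  Adj a b :=
    (a.1 = b.1 ∧ ((a.2 = 0 ∧ b.2 = 1) ∨ (a.2 = 1 ∧ b.2 = 0)))
    ∨ (G.Adj a.1 b.1 ∧ ((a.2 = 1 ∧ b.2 = 2) ∨ (a.2 = 2 ∧ b.2 = 1)))
  symm := ⟨by
    rintro a b (⟨h1, h2 | h2⟩ | ⟨h1, h2 | h2⟩)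
    · exact Or.inl ⟨h1.symm, Or.inr ⟨h2.2, h2.1⟩⟩
    · exact Or.inl ⟨h1.symm, Or.inl ⟨h2.2, h2.1⟩⟩
    · exact Or.inr ⟨h1.symm, Or.inr ⟨h2.2, h2.1⟩⟩
    · exact Or.inr ⟨h1.symm, Or.inl ⟨h2.2, h2.1⟩⟩⟩
  loopless := ⟨by
    rintro a (⟨h1, ⟨h2, h3⟩ | ⟨h2, h3⟩⟩ | ⟨h1, ⟨h2, h3⟩ | ⟨h2, h3⟩⟩)
    · rw [h2] at h3; exact absurd h3 (by decide)
    · rw [h2] at h3; exact absurd h3 (by decide)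
    · exact G.loopless.irrefl a.1 h1
    · exact G.loopless.irrefl a.1 h1⟩

/-- One step of deterministic SIS spread (α = 1, c = 0): the infected set together with
all neighbors of infected nodes. -/
def spread {W : Type*} (H : SimpleGraph W) (S : Set W) : Set W :=
  S ∪ {w | ∃ z ∈ S, H.Adj w z}

/-!
The only neighbours of a layer-2 copy `(u, 2)` in `G*` are the layer-1 copies `(v, 1)` with
`G.Adj u v`, and `(v, 1)` is infected exactly when `v ∉ C`. So `(u, 2)` becomes infected iff
`u` has a neighbour outside `C`, and confinement to `C × {2}` says that every edge with an
endpoint outside `C` has its other endpoint in `C`.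
-/

namespace Gstar

variable {V : Type*} {G : SimpleGraph V}

theorem adj_layer_two_iff {u : V} {z : V × Fin 3} :
    (Gstar G).Adj (u, 2) z ↔ G.Adj u z.1 ∧ z.2 = 1 := by
  obtain ⟨v, i⟩ := z
  simp only [Gstar]
  fin_cases i <;> simp

theorem mem_spread_layer_two_iff {S : Set (V × Fin 3)} {u : V} :
    (u, 2) ∈ spread (Gstar G) S ↔ (u, 2) ∈ S ∨ ∃ v, G.Adj u v ∧ (v, 1) ∈ S := by
  simp only [spread, Set.mem_union, Set.mem_ofPred_eq, adj_layer_two_iff, Prod.exists]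
  constructor
  · rintro (h | ⟨v, i, hS, hadj, rfl⟩)
    exacts [Or.inl h, Or.inr ⟨v, hadj, hS⟩]
  · rintro (h | ⟨v, hadj, hS⟩)
    exacts [Or.inl h, Or.inr ⟨v, 1, hS, hadj, rfl⟩]

end Gstar

theorem spread_confined_iff_vertexCover_general
    {V : Type*} (G : SimpleGraph V) (C : Set V) :
    (spread (Gstar G)
        (((Set.univ : Set V) ×ˢ ({0} : Set (Fin 3))) ∪ (Cᶜ ×ˢ ({1} : Set (Fin 3))))
      ∩ ((Set.univ : Set V) ×ˢ ({2} : Set (Fin 3)))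
      ⊆ C ×ˢ ({2} : Set (Fin 3)))
    ↔ ∀ u v, G.Adj u v → u ∈ C ∨ v ∈ C := by
  have layer_two (u : V) :
      (u, 2) ∈ spread (Gstar G) ((Set.univ ×ˢ {0}) ∪ (Cᶜ ×ˢ {1})) ↔ ∃ v, G.Adj u v ∧ v ∉ C := by
    simp [Gstar.mem_spread_layer_two_iff]
  constructor
  · intro h u v huv
    by_contra! hc
    exact hc.1 (h ⟨(layer_two u).2 ⟨v, huv, hc.2⟩, trivial, rfl⟩).1
  · rintro hcover ⟨u, i⟩ ⟨hu, -, rfl : i = 2⟩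
    obtain ⟨v, huv, hv⟩ := (layer_two u).1 hu
    exact ⟨(hcover u v huv).resolve_right hv, rfl⟩

/-- starting from infected set `(V × {0}) ∪ ((V ∖ C) × {1})` (the state at
time 1 after screening the `V₁`-copies of `C`), one step of deterministic spread in `G*`
reaches layer `V × {2}` only within `C × {2}` if and only if `C` is a vertex cover of
`G`. -/
theorem spread_confined_iff_vertexCover
    {V : Type*} [Fintype V] (G : SimpleGraph V) (C : Set V) :
    (spread (Gstar G)
        (((Set.univ : Set V) ×ˢ ({0} : Set (Fin 3))) ∪ (Cᶜ ×ˢ ({1} : Set (Fin 3))))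
      ∩ ((Set.univ : Set V) ×ˢ ({2} : Set (Fin 3)))
      ⊆ C ×ˢ ({2} : Set (Fin 3)))
    ↔ ∀ u v, G.Adj u v → u ∈ C ∨ v ∈ C :=
  spread_confined_iff_vertexCover_general G C
end
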